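/- For every real number x with x > 1/3 and every real number z with z > 3x + √(9x² − 1), the series ∑_{n=0}^∞ (1/(4n+3)) · B_{4n+3}(x)/z^{4n+3} converges and equals (1/(8√(9x² − 1))) · ln((z² + 2√(9x² − 1)·z − 1)/(z² − 2√(9x² − 1)·z − 1)) − (1/(4√(9x² − 1))) · arctan(2√(9x² − 1)·z/(z² + 1)). -/

import Mathlib

/-- Balancing polynomials: `B 0 x = 0`, `B 1 x = 1`,
`B (n+2) x = 6 x B (n+1) x - B n x`. -/
def balancing (x : ℝ) : ℕ → ℝ
  | 0 => 0
  | 1 => 1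
  | n + 2 => 6 * x * balancing x (n + 1) - balancing x n

lemma balancing_binet (x α β : ℝ) (hab : α + β = 6 * x) (hm : α * β = 1) :
    ∀ n : ℕ, (α - β) * balancing x n = α ^ n - β ^ n := by
  have hα : α ^ 2 = 6 * x * α - 1 := by linear_combination α * hab - hm
  have hβ : β ^ 2 = 6 * x * β - 1 := by linear_combination β * hab - hm
  intro n
  induction n using Nat.twoStepInduction with
  | zero => simp [balancing]
  | one => simp [balancing]
  | more n ih1 ih2 =>
    have hdef : balancing x (n + 2) = 6 * x * balancing x (n + 1) - balancing x n := rfl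
    rw [hdef]
    linear_combination 6 * x * ih2 - ih1 - α ^ n * hα + β ^ n * hβ

lemma hasSum_quarter {t : ℝ} (h : |t| < 1) :
    HasSum (fun n : ℕ => t ^ (4 * n + 3) / (4 * (n : ℝ) + 3))
      ((Real.log (1 + t) - Real.log (1 - t)) / 4 - Real.arctan t / 2) := by
  have h1 : HasSum (fun k : ℕ => t ^ (2 * k + 1) / (2 * (k : ℝ) + 1))
      ((Real.log (1 + t) - Real.log (1 - t)) / 2) := by
    have h0 := (Real.hasSum_log_sub_log_of_abs_lt_one h).mul_left (1 / 2)
    have e : (fun k : ℕ => (1 / 2 : ℝ) * (2 * (1 / (2 * (k : ℝ) + 1)) * t ^ (2 * k + 1)))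
        = fun k : ℕ => t ^ (2 * k + 1) / (2 * (k : ℝ) + 1) := by
      funext k; ring
    rw [e] at h0
    convert h0 using 1; rfl; ring
  have h2 : HasSum (fun k : ℕ => (-1) ^ k * t ^ (2 * k + 1) / (2 * (k : ℝ) + 1))
      (Real.arctan t) := by
    have := Real.hasSum_arctan (x := t) (by rwa [Real.norm_eq_abs])
    convert this using 2 with k
    push_cast; ring
  have h3 := h1.sub h2
  have hinj : Function.Injective (fun n : ℕ => 2 * n + 1) := fun a b hab => by
    simpa using hab
  have hsupp : ∀ m ∉ Set.range (fun n : ℕ => 2 * n + 1),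
      (fun k : ℕ => t ^ (2 * k + 1) / (2 * (k : ℝ) + 1)
        - (-1) ^ k * t ^ (2 * k + 1) / (2 * (k : ℝ) + 1)) m = 0 := by
    intro m hm
    have hev : Even m := by simpa using hm
    simp [hev.neg_one_pow]
  have h4 := (hinj.hasSum_iff hsupp).mpr h3
  have h5 := h4.mul_left (1 / 2)
  convert h5 using 1
  · rfl
  · funext n
    simp only [Function.comp]
    have hodd : (-1 : ℝ) ^ (2 * n + 1) = -1 := Odd.neg_one_pow ⟨n, by ring⟩
    have hexp : 2 * (2 * n + 1) + 1 = 4 * n + 3 := by ring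
    rw [hexp, hodd]
    push_cast; ring
  · ring

theorem balancing_subseries (x z : ℝ) (hx : x > 1 / 3)
    (hz : z > 3 * x + Real.sqrt (9 * x ^ 2 - 1)) :
    HasSum
      (fun n : ℕ => 1 / (4 * (n : ℝ) + 3) *
        (balancing x (4 * n + 3) / z ^ (4 * n + 3)))
      (1 / (8 * Real.sqrt (9 * x ^ 2 - 1)) *
        Real.log ((z ^ 2 + 2 * Real.sqrt (9 * x ^ 2 - 1) * z - 1) /
          (z ^ 2 - 2 * Real.sqrt (9 * x ^ 2 - 1) * z - 1)) -
       1 / (4 * Real.sqrt (9 * x ^ 2 - 1)) *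
        Real.arctan (2 * Real.sqrt (9 * x ^ 2 - 1) * z / (z ^ 2 + 1))) := by
  have h9 : (0:ℝ) < 9 * x ^ 2 - 1 := by nlinarith
  set s : ℝ := Real.sqrt (9 * x ^ 2 - 1) with hs_def
  have hs0 : 0 < s := Real.sqrt_pos.2 h9
  have hs2 : s ^ 2 = 9 * x ^ 2 - 1 := Real.sq_sqrt h9.le
  clear_value s
  obtain ⟨α, hα_def⟩ : ∃ α : ℝ, α = 3 * x + s := ⟨_, rfl⟩
  obtain ⟨β, hβ_def⟩ : ∃ β : ℝ, β = 3 * x - s := ⟨_, rfl⟩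
  rw [← hα_def] at hz
  have hab : α + β = 6 * x := by rw [hα_def, hβ_def]; ring
  have hm : α * β = 1 := by rw [hα_def, hβ_def]; nlinarith [hs2]
  have hαβ : α - β = 2 * s := by rw [hα_def, hβ_def]; ring
  have hα1 : 1 < α := by rw [hα_def]; nlinarith
  have hα0 : 0 < α := by linarith
  have hβ0 : 0 < β := by nlinarith [hm, hα0]
  have hβ1 : β < 1 := by nlinarith [hm, hα1, hβ0]
  have hzα : α < z := hz
  have hz1 : 1 < z := hα1.trans hzα
  have hz0 : 0 < z := by linarith
  have hzβ : β < z := by linarith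
  obtain ⟨a, ha_def⟩ : ∃ a : ℝ, a = α / z := ⟨_, rfl⟩
  obtain ⟨b, hb_def⟩ : ∃ b : ℝ, b = β / z := ⟨_, rfl⟩
  have ha0 : 0 < a := ha_def ▸ div_pos hα0 hz0
  have ha1 : a < 1 := ha_def ▸ (div_lt_one hz0).2 hzα
  have hb0 : 0 < b := hb_def ▸ div_pos hβ0 hz0
  have hb1 : b < 1 := hb_def ▸ (div_lt_one hz0).2 hzβ
  have hA := hasSum_quarter (t := a) (by rw [abs_of_pos ha0]; exact ha1)
  have hB := hasSum_quarter (t := b) (by rw [abs_of_pos hb0]; exact hb1)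
  have hsum0 := (hA.sub hB).mul_left (1 / (2 * s))
  have key : (fun n : ℕ => 1 / (4 * (n : ℝ) + 3) *
        (balancing x (4 * n + 3) / z ^ (4 * n + 3)))
      = fun n : ℕ => 1 / (2 * s) *
        (a ^ (4 * n + 3) / (4 * (n : ℝ) + 3) - b ^ (4 * n + 3) / (4 * (n : ℝ) + 3)) := by
    funext n
    have hbin := balancing_binet x α β hab hm (4 * n + 3)
    rw [hαβ] at hbin
    rw [ha_def, hb_def, div_pow, div_pow]
    have hzm : z ^ (4 * n + 3) ≠ 0 := pow_ne_zero _ (ne_of_gt hz0)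
    have hden : (4 * (n : ℝ) + 3) ≠ 0 := by positivity
    field_simp
    linear_combination hbin
  rw [key]
  -- factorizations
  have e1 : z ^ 2 + 2 * s * z - 1 = (z + α) * (z - β) := by
    linear_combination (-z) * hαβ + hm
  have e2 : z ^ 2 - 2 * s * z - 1 = (z - α) * (z + β) := by
    linear_combination z * hαβ + hm
  have hp1 : (0:ℝ) < z + α := by linarith
  have hp2 : (0:ℝ) < z - β := by linarith
  have hp3 : (0:ℝ) < z - α := by linarith
  have hp4 : (0:ℝ) < z + β := by linarith
  have ea1 : 1 + a = (z + α) / z := by rw [ha_def]; field_simp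
  have ea2 : 1 - a = (z - α) / z := by rw [ha_def]; field_simp
  have eb1 : 1 + b = (z + β) / z := by rw [hb_def]; field_simp
  have eb2 : 1 - b = (z - β) / z := by rw [hb_def]; field_simp
  have hlog : Real.log ((z ^ 2 + 2 * s * z - 1) / (z ^ 2 - 2 * s * z - 1))
      = (Real.log (1 + a) - Real.log (1 - a)) - (Real.log (1 + b) - Real.log (1 - b)) := by
    rw [e1, e2, Real.log_div (by positivity) (by positivity),
      Real.log_mul (ne_of_gt hp1) (ne_of_gt hp2),
      Real.log_mul (ne_of_gt hp3) (ne_of_gt hp4),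
      ea1, ea2, eb1, eb2,
      Real.log_div (ne_of_gt hp1) (ne_of_gt hz0),
      Real.log_div (ne_of_gt hp3) (ne_of_gt hz0),
      Real.log_div (ne_of_gt hp4) (ne_of_gt hz0),
      Real.log_div (ne_of_gt hp2) (ne_of_gt hz0)]
    ring
  have harctan : Real.arctan (2 * s * z / (z ^ 2 + 1))
      = Real.arctan a - Real.arctan b := by
    have hcond : a * (-b) < 1 := by nlinarith [mul_pos ha0 hb0]
    have hstep := Real.arctan_add hcond
    rw [Real.arctan_neg] at hstep
    have harg : (a + -b) / (1 - a * -b) = 2 * s * z / (z ^ 2 + 1) := by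
      have hsub : a + -b = 2 * s / z := by
        rw [ha_def, hb_def]
        field_simp
        linear_combination hαβ
      have hmul2 : 1 - a * -b = (z ^ 2 + 1) / z ^ 2 := by
        rw [ha_def, hb_def]
        field_simp
        linear_combination hm
      rw [hsub, hmul2]
      field_simp
    rw [harg] at hstep
    linarith [hstep]
  rw [hlog, harctan]
  convert hsum0 using 1
  · rfl
  ring
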